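/- Let W₅ be the real vector space spanned by the functions 1, cos x, sin x, cos 2x, sin 2x. Then for every u ∈ W₅, the function (u²)⁽⁵⁾ + 25(u²)''' + 144(u²)' again belongs to W₅. -/
import Mathlib

open Real

noncomputable def W5 : Submodule ℝ (ℝ → ℝ) :=
  Submodule.span ℝ
    {fun _ : ℝ => (1:ℝ), Real.cos, Real.sin,
      fun x : ℝ => Real.cos (2 * x), fun x : ℝ => Real.sin (2 * x)}

-- multiple-angle expansions
lemma hc3 (x : ℝ) : Real.cos (3*x) = Real.cos (2*x) * Real.cos x - Real.sin (2*x) * Real.sin x := by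
  rw [show (3:ℝ)*x = 2*x + x by ring, Real.cos_add]
lemma hs3 (x : ℝ) : Real.sin (3*x) = Real.sin (2*x) * Real.cos x + Real.cos (2*x) * Real.sin x := by
  rw [show (3:ℝ)*x = 2*x + x by ring, Real.sin_add]
lemma hc4 (x : ℝ) : Real.cos (4*x) = Real.cos (2*x) * Real.cos (2*x) - Real.sin (2*x) * Real.sin (2*x) := by
  rw [show (4:ℝ)*x = 2*x + 2*x by ring, Real.cos_add]
lemma hs4 (x : ℝ) : Real.sin (4*x) = Real.sin (2*x) * Real.cos (2*x) + Real.cos (2*x) * Real.sin (2*x) := by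
  rw [show (4:ℝ)*x = 2*x + 2*x by ring, Real.sin_add]
lemma hc2 (x : ℝ) : Real.cos (2*x) = Real.cos x * Real.cos x - Real.sin x * Real.sin x := by
  rw [show (2:ℝ)*x = x + x by ring, Real.cos_add]
lemma hs2 (x : ℝ) : Real.sin (2*x) = Real.sin x * Real.cos x + Real.cos x * Real.sin x := by
  rw [show (2:ℝ)*x = x + x by ring, Real.sin_add]

-- product-to-sum lemmas
lemma lcc11 (x : ℝ) : Real.cos x * Real.cos x = 1/2 + Real.cos (2*x)/2 := by
  rw [hc2]; linear_combination (1/2) * Real.sin_sq_add_cos_sq x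
lemma lss11 (x : ℝ) : Real.sin x * Real.sin x = 1/2 - Real.cos (2*x)/2 := by
  rw [hc2]; linear_combination (1/2) * Real.sin_sq_add_cos_sq x
lemma lsc11 (x : ℝ) : Real.sin x * Real.cos x = Real.sin (2*x)/2 := by
  rw [hs2]; ring
lemma lcc22 (x : ℝ) : Real.cos (2*x) * Real.cos (2*x) = 1/2 + Real.cos (4*x)/2 := by
  rw [hc4, hc2, hs2]; linear_combination ((Real.sin x * Real.sin x + Real.cos x * Real.cos x + 1)/2) * Real.sin_sq_add_cos_sq x
lemma lss22 (x : ℝ) : Real.sin (2*x) * Real.sin (2*x) = 1/2 - Real.cos (4*x)/2 := by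
  rw [hc4, hc2, hs2]; linear_combination ((Real.sin x * Real.sin x + Real.cos x * Real.cos x + 1)/2) * Real.sin_sq_add_cos_sq x
lemma lsc22 (x : ℝ) : Real.sin (2*x) * Real.cos (2*x) = Real.sin (4*x)/2 := by
  rw [hs4]; ring
lemma lcc12 (x : ℝ) : Real.cos x * Real.cos (2*x) = Real.cos x/2 + Real.cos (3*x)/2 := by
  rw [hc3, hc2, hs2]; linear_combination (Real.cos x / 2) * Real.sin_sq_add_cos_sq x
lemma lcs12 (x : ℝ) : Real.cos x * Real.sin (2*x) = Real.sin x/2 + Real.sin (3*x)/2 := by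
  rw [hs3, hc2, hs2]; linear_combination (Real.sin x / 2) * Real.sin_sq_add_cos_sq x
lemma lsc12 (x : ℝ) : Real.sin x * Real.cos (2*x) = Real.sin (3*x)/2 - Real.sin x/2 := by
  rw [hs3, hc2, hs2]; linear_combination (-(Real.sin x / 2)) * Real.sin_sq_add_cos_sq x
lemma lss12 (x : ℝ) : Real.sin x * Real.sin (2*x) = Real.cos x/2 - Real.cos (3*x)/2 := by
  rw [hc3, hc2, hs2]; linear_combination (Real.cos x / 2) * Real.sin_sq_add_cos_sq x

/-- trig polynomial of degree ≤ 4 -/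
noncomputable def G (A0 A1 B1 A2 B2 A3 B3 A4 B4 : ℝ) : ℝ → ℝ := fun x =>
  A0 + A1 * Real.cos x + B1 * Real.sin x + A2 * Real.cos (2*x) + B2 * Real.sin (2*x)
     + A3 * Real.cos (3*x) + B3 * Real.sin (3*x) + A4 * Real.cos (4*x) + B4 * Real.sin (4*x)

lemma hasDerivAt_G (A0 A1 B1 A2 B2 A3 B3 A4 B4 x : ℝ) :
    HasDerivAt (G A0 A1 B1 A2 B2 A3 B3 A4 B4)
      (G 0 B1 (-A1) (2*B2) (-(2*A2)) (3*B3) (-(3*A3)) (4*B4) (-(4*A4)) x) x := by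
  have hk : ∀ k : ℝ, HasDerivAt (fun y : ℝ => k * y) k x := by
    intro k; simpa using (hasDerivAt_id x).const_mul k
  have h : HasDerivAt (G A0 A1 B1 A2 B2 A3 B3 A4 B4)
      (0 + A1 * (-Real.sin x) + B1 * Real.cos x
        + A2 * (-Real.sin (2*x) * 2) + B2 * (Real.cos (2*x) * 2)
        + A3 * (-Real.sin (3*x) * 3) + B3 * (Real.cos (3*x) * 3)
        + A4 * (-Real.sin (4*x) * 4) + B4 * (Real.cos (4*x) * 4)) x := by
    exact ((((((((hasDerivAt_const x A0).add ((Real.hasDerivAt_cos x).const_mul A1)).add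
      ((Real.hasDerivAt_sin x).const_mul B1)).add (((hk 2).cos).const_mul A2)).add
      (((hk 2).sin).const_mul B2)).add (((hk 3).cos).const_mul A3)).add
      (((hk 3).sin).const_mul B3)).add (((hk 4).cos).const_mul A4)).add
      (((hk 4).sin).const_mul B4)
  convert h using 1
  simp [G]; ring

lemma derivG (A0 A1 B1 A2 B2 A3 B3 A4 B4 : ℝ) :
    deriv (G A0 A1 B1 A2 B2 A3 B3 A4 B4)
      = G 0 B1 (-A1) (2*B2) (-(2*A2)) (3*B3) (-(3*A3)) (4*B4) (-(4*A4)) :=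
  funext fun x => (hasDerivAt_G A0 A1 B1 A2 B2 A3 B3 A4 B4 x).deriv

lemma iter3G (A0 A1 B1 A2 B2 A3 B3 A4 B4 : ℝ) :
    iteratedDeriv 3 (G A0 A1 B1 A2 B2 A3 B3 A4 B4)
      = G 0 (-B1) A1 (-8*B2) (8*A2) (-27*B3) (27*A3) (-64*B4) (64*A4) := by
  rw [iteratedDeriv_succ', derivG, iteratedDeriv_succ', derivG, iteratedDeriv_succ', derivG, iteratedDeriv_zero]
  funext x; simp only [G]; ring

lemma iter5G (A0 A1 B1 A2 B2 A3 B3 A4 B4 : ℝ) :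
    iteratedDeriv 5 (G A0 A1 B1 A2 B2 A3 B3 A4 B4)
      = G 0 B1 (-A1) (32*B2) (-32*A2) (243*B3) (-243*A3) (1024*B4) (-1024*A4) := by
  rw [iteratedDeriv_succ', derivG, iteratedDeriv_succ', derivG, iter3G]
  funext x; simp only [G]; ring

theorem quintic_NDE_invariant_subspace :
    ∀ u : ℝ → ℝ, u ∈ W5 →
      (fun x : ℝ =>
        iteratedDeriv 5 (fun x : ℝ => u x ^ 2) x
          + 25 * iteratedDeriv 3 (fun x : ℝ => u x ^ 2) x
          + 144 * deriv (fun x : ℝ => u x ^ 2) x) ∈ W5 := by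
  intro u hu
  simp only [W5, Submodule.mem_span_insert, Submodule.mem_span_singleton] at hu
  obtain ⟨a, _, ⟨b, _, ⟨c, _, ⟨d, _, ⟨e, rfl⟩, rfl⟩, rfl⟩, rfl⟩, hu⟩ := hu
  set A0 : ℝ := a^2 + (b^2+c^2+d^2+e^2)/2 with hA0
  set A1 : ℝ := 2*a*b + b*d + c*e with hA1
  set B1 : ℝ := 2*a*c + b*e - c*d with hB1
  set A2 : ℝ := 2*a*d + b^2/2 - c^2/2 with hA2
  set B2 : ℝ := 2*a*e + b*c with hB2
  have hu2 : (fun x : ℝ => u x ^ 2)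
      = G A0 A1 B1 A2 B2 (b*d - c*e) (b*e + c*d) (d^2/2 - e^2/2) (d*e) := by
    funext x
    have hux : u x = a + b*Real.cos x + c*Real.sin x + d*Real.cos (2*x) + e*Real.sin (2*x) := by
      rw [hu]; simp [Pi.add_apply, Pi.smul_apply, smul_eq_mul]; ring
    rw [hux]
    simp only [G, hA0, hA1, hB1, hA2, hB2]
    linear_combination b^2 * lcc11 x + c^2 * lss11 x + 2*b*c * lsc11 x
      + d^2 * lcc22 x + e^2 * lss22 x + 2*d*e * lsc22 x
      + 2*b*d * lcc12 x + 2*b*e * lcs12 x + 2*c*d * lsc12 x + 2*c*e * lss12 x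
  rw [hu2]
  have hend : (fun x : ℝ =>
        iteratedDeriv 5 (G A0 A1 B1 A2 B2 (b*d - c*e) (b*e + c*d) (d^2/2 - e^2/2) (d*e)) x
          + 25 * iteratedDeriv 3 (G A0 A1 B1 A2 B2 (b*d - c*e) (b*e + c*d) (d^2/2 - e^2/2) (d*e)) x
          + 144 * deriv (G A0 A1 B1 A2 B2 (b*d - c*e) (b*e + c*d) (d^2/2 - e^2/2) (d*e)) x)
      = (120*B1) • Real.cos + ((-(120*A1)) • Real.sin
          + ((120*B2) • (fun x : ℝ => Real.cos (2*x)) + (-(120*A2)) • (fun x : ℝ => Real.sin (2*x)))) := by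
    funext x
    rw [iter5G, iter3G, derivG]
    simp only [G, Pi.add_apply, Pi.smul_apply, smul_eq_mul]
    ring
  rw [hend]
  refine Submodule.add_mem _
    (Submodule.smul_mem _ _ (Submodule.subset_span
      (Set.mem_insert_of_mem _ (Set.mem_insert _ _))))
    (Submodule.add_mem _
      (Submodule.smul_mem _ _ (Submodule.subset_span
        (Set.mem_insert_of_mem _ (Set.mem_insert_of_mem _ (Set.mem_insert _ _)))))
      (Submodule.add_mem _
        (Submodule.smul_mem _ _ (Submodule.subset_span
          (Set.mem_insert_of_mem _ (Set.mem_insert_of_mem _ (Set.mem_insert_of_mem _ (Set.mem_insert _ _))))))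
        (Submodule.smul_mem _ _ (Submodule.subset_span
          (Set.mem_insert_of_mem _ (Set.mem_insert_of_mem _ (Set.mem_insert_of_mem _ (Set.mem_insert_of_mem _ rfl))))))))
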